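/- (Rate region of the Wyner-Ziv-type scheme of Theorem 2 equals C.) For every (S,U,V,X₁,X₂,Y) ∈ 𝒫, the set of pairs (Rc,R1) with Rc ≥ 0, R1 ≥ 0 for which there exist real numbers R0 and R̂ with 0 ≤ R0 ≤ I(X₂;Y), R̂ ≥ I(V;S|X₂), R1 ≤ I(U;Y|V,X₂) − I(U;S|V,X₂), (R̂ − R0) + R1 ≤ I(U,V;Y|X₂) − I(U;S|V,X₂), and Rc + R1 + R̂ ≤ I(U,V,X₂;Y) − I(U;S|V,X₂), equals the set of pairs (Rc,R1) with Rc ≥ 0, R1 ≥ 0 satisfying R1 ≤ I(U;Y|V,X₂) − I(U;S|V,X₂) and Rc + R1 ≤ I(U,V,X₂;Y) − I(U,V,X₂;S). In particular, the union of the former regions over 𝒫 equals C. -/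

import Mathlib

open scoped BigOperators

noncomputable section

/-- Shannon mutual information `I(A;B)` of a joint pmf `p` on finite alphabets
(the conventions for vanishing probabilities are handled by `Real.log 0 = 0`
and division by zero being zero). -/
def mi {A B : Type} [Fintype A] [Fintype B] (p : A → B → ℝ) : ℝ :=
  ∑ a, ∑ b, p a b * Real.log (p a b / ((∑ b', p a b') * (∑ a', p a' b)))

/-- Conditional mutual information `I(A;B|C)` of a joint pmf `p` on finite alphabets. -/
def cmi {A B C : Type} [Fintype A] [Fintype B] [Fintype C] (p : A → B → C → ℝ) : ℝ :=
  ∑ a, ∑ b, ∑ c, p a b c *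
    Real.log (((∑ a', ∑ b', p a' b' c) * p a b c) /
      ((∑ b', p a b' c) * (∑ a', p a' b c)))

/-- A two-user state-dependent discrete memoryless multiple access channel:
a state pmf `Q` on the finite state alphabet `S` and a channel transition
pmf `W y|x1,x2,s` with finite input alphabets `X1`, `X2` and output alphabet `Y`. -/
structure DMMAC (S X1 X2 Y : Type) [Fintype S] [Fintype X1] [Fintype X2] [Fintype Y] where
  Q : S → ℝ
  W : X1 → X2 → S → Y → ℝ
  Q_nonneg : ∀ s, 0 ≤ Q s
  Q_sum : ∑ s, Q s = 1
  W_nonneg : ∀ x1 x2 s y, 0 ≤ W x1 x2 s y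
  W_sum : ∀ x1 x2 s, ∑ y, W x1 x2 s y = 1

variable {S X1 X2 Y : Type} [Fintype S] [Fintype X1] [Fintype X2] [Fintype Y]

/-- An element of the class 𝒫: auxiliary finite alphabets `U`, `V` together with a joint
distribution of `(S,U,V,X₁,X₂,Y)` factorizing as
`Q_S(s)·P(x₂)·P(v|s,x₂)·P(u,x₁|s,v,x₂)·W(y|x₁,x₂,s)`. -/
structure AuxP (ch : DMMAC S X1 X2 Y) where
  U : Type
  V : Type
  [fU : Fintype U]
  [fV : Fintype V]
  pX2 : X2 → ℝ
  pV : S → X2 → V → ℝ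
  pUX1 : S → V → X2 → U → X1 → ℝ
  pX2_nonneg : ∀ x2, 0 ≤ pX2 x2
  pX2_sum : ∑ x2, pX2 x2 = 1
  pV_nonneg : ∀ s x2 v, 0 ≤ pV s x2 v
  pV_sum : ∀ s x2, ∑ v, pV s x2 v = 1
  pUX1_nonneg : ∀ s v x2 u x1, 0 ≤ pUX1 s v x2 u x1
  pUX1_sum : ∀ s v x2, ∑ u, ∑ x1, pUX1 s v x2 u x1 = 1

attribute [instance] AuxP.fU AuxP.fV

namespace AuxP

variable {ch : DMMAC S X1 X2 Y}

/-- The joint pmf of `(S,U,V,X₁,X₂,Y)` induced by an element of 𝒫. -/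
def joint (d : AuxP ch) (s : S) (u : d.U) (v : d.V) (x1 : X1) (x2 : X2) (y : Y) : ℝ :=
  ch.Q s * d.pX2 x2 * d.pV s x2 v * d.pUX1 s v x2 u x1 * ch.W x1 x2 s y

/-- `I(U;Y|V,X₂)` -/
def iUY_VX2 (d : AuxP ch) : ℝ :=
  cmi (fun (u : d.U) (y : Y) (c : d.V × X2) => ∑ s, ∑ x1, d.joint s u c.1 x1 c.2 y)

/-- `I(U;S|V,X₂)` -/
def iUS_VX2 (d : AuxP ch) : ℝ :=
  cmi (fun (u : d.U) (s : S) (c : d.V × X2) => ∑ x1, ∑ y, d.joint s u c.1 x1 c.2 y)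

/-- `I(U,V,X₂;Y)` -/
def iUVX2Y (d : AuxP ch) : ℝ :=
  mi (fun (a : d.U × d.V × X2) (y : Y) => ∑ s, ∑ x1, d.joint s a.1 a.2.1 x1 a.2.2 y)

/-- `I(U,V,X₂;S)` -/
def iUVX2S (d : AuxP ch) : ℝ :=
  mi (fun (a : d.U × d.V × X2) (s : S) => ∑ x1, ∑ y, d.joint s a.1 a.2.1 x1 a.2.2 y)

/-- `I(V,X₂;Y)` -/
def iVX2Y (d : AuxP ch) : ℝ :=
  mi (fun (b : d.V × X2) (y : Y) => ∑ s, ∑ u, ∑ x1, d.joint s u b.1 x1 b.2 y)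

/-- `I(V,X₂;S)` -/
def iVX2S (d : AuxP ch) : ℝ :=
  mi (fun (b : d.V × X2) (s : S) => ∑ u, ∑ x1, ∑ y, d.joint s u b.1 x1 b.2 y)

/-- `I(X₂;Y)` -/
def iX2Y (d : AuxP ch) : ℝ :=
  mi (fun (x2 : X2) (y : Y) => ∑ s, ∑ u, ∑ v, ∑ x1, d.joint s u v x1 x2 y)

/-- `I(V;S|X₂)` -/
def iVS_X2 (d : AuxP ch) : ℝ :=
  cmi (fun (v : d.V) (s : S) (x2 : X2) => ∑ u, ∑ x1, ∑ y, d.joint s u v x1 x2 y)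

/-- `I(U,V;Y|X₂)` -/
def iUVY_X2 (d : AuxP ch) : ℝ :=
  cmi (fun (a : d.U × d.V) (y : Y) (x2 : X2) => ∑ s, ∑ x1, d.joint s a.1 a.2 x1 x2 y)

end AuxP

/-- The region 𝒞. -/
def regionC (ch : DMMAC S X1 X2 Y) : Set (ℝ × ℝ) :=
  {r | 0 ≤ r.1 ∧ 0 ≤ r.2 ∧ ∃ d : AuxP ch,
    r.2 ≤ d.iUY_VX2 - d.iUS_VX2 ∧ r.1 + r.2 ≤ d.iUVX2Y - d.iUVX2S}

/-- Average probability of error of a code `(φ1, φ2, ψ)`: Encoder 1 knows the whole state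
sequence non-causally, Encoder 2 knows it strictly causally, messages are uniform and
independent, states are i.i.d. `Q` and the channel is memoryless. -/
def Perr (ch : DMMAC S X1 X2 Y) {n Mc M1 : ℕ}
    (φ1 : Fin Mc → Fin M1 → (Fin n → S) → (Fin n → X1))
    (φ2 : Fin Mc → (i : Fin n) → (Fin i.val → S) → X2)
    (ψ : (Fin n → Y) → Fin Mc × Fin M1) : ℝ :=
  (1 / ((Mc : ℝ) * (M1 : ℝ))) *
    ∑ wc : Fin Mc, ∑ w1 : Fin M1, ∑ s : Fin n → S, ∑ y : Fin n → Y,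
      ((∏ i : Fin n, ch.Q (s i)) *
        ∏ i : Fin n,
          ch.W (φ1 wc w1 s i) (φ2 wc i (fun j => s ⟨j.1, j.2.trans i.2⟩)) (s i) (y i)) *
      (if ψ y = (wc, w1) then 0 else 1)

/-- A rate pair `(Rc, R1)` is achievable if for every `ε > 0` there is an
`(Mc, M1, n, ε)` code with `Mc ≥ 2^{nRc}` and `M1 ≥ 2^{nR1}`. -/
def Achievable (ch : DMMAC S X1 X2 Y) (Rc R1 : ℝ) : Prop :=
  0 ≤ Rc ∧ 0 ≤ R1 ∧
  ∀ ε : ℝ, 0 < ε →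
    ∃ (n Mc M1 : ℕ) (φ1 : Fin Mc → Fin M1 → (Fin n → S) → (Fin n → X1))
      (φ2 : Fin Mc → (i : Fin n) → (Fin i.val → S) → X2)
      (ψ : (Fin n → Y) → Fin Mc × Fin M1),
      0 < n ∧ (2 : ℝ) ^ ((n : ℝ) * Rc) ≤ (Mc : ℝ) ∧ (2 : ℝ) ^ ((n : ℝ) * R1) ≤ (M1 : ℝ) ∧
      Perr ch φ1 φ2 ψ ≤ ε

/-- The capacity region: the closure of the set of achievable rate pairs. -/
def capacityRegion (ch : DMMAC S X1 X2 Y) : Set (ℝ × ℝ) :=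
  closure {r : ℝ × ℝ | Achievable ch r.1 r.2}



/-!
Eliminating the auxiliary rates rests on two chain-rule identities. Splitting off `X₂` gives
`I(U,V,X₂;Y) = I(X₂;Y) + I(U,V;Y|X₂)`, and splitting off `U` and then `V` gives
`I(U,V,X₂;S) = I(X₂;S) + I(V;S|X₂) + I(U;S|V,X₂)` with `I(X₂;S) = 0` because `X₂` is
independent of `S`. With these, `R0 = I(X₂;Y) ≥ 0` and `R̂ = I(V;S|X₂)` are optimal, and the
constraint on `R̂ - R0 + R1` then follows from the sum-rate constraint since `Rc ≥ 0`.
-/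

section MutualInformation

variable {A B C : Type} [Fintype A] [Fintype B] [Fintype C]

lemma sum_pos_of_pos {f : A → ℝ} (hf : ∀ a, 0 ≤ f a) {a : A} (ha : 0 < f a) : 0 < ∑ a', f a' :=
  ha.trans_le (Finset.single_le_sum (fun a' _ => hf a') (Finset.mem_univ a))

lemma sub_le_mul_log_div {p m : ℝ} (hp : 0 ≤ p) (hm : 0 ≤ m) (hpm : 0 < p → 0 < m) :
    p - m ≤ p * Real.log (p / m) := by
  rcases hp.eq_or_lt with rfl | hp
  · simpa using hm
  have hm := hpm hp
  calc p - m = m * (p / m - 1) := by field_simp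
    _ ≤ m * (p / m * Real.log (p / m)) := by
      gcongr; exact Real.self_sub_one_le_mul_log (by positivity)
    _ = p * Real.log (p / m) := by field_simp

lemma mi_nonneg {p : A → B → ℝ} (hp : ∀ a b, 0 ≤ p a b) (hsum : ∑ a, ∑ b, p a b = 1) :
    0 ≤ mi p := by
  have hsum' : ∑ b, ∑ a, p a b = 1 := by rwa [Finset.sum_comm]
  calc 0 = ∑ a, ∑ b, (p a b - (∑ b', p a b') * ∑ a', p a' b) := by
        simp only [Finset.sum_sub_distrib, ← Finset.mul_sum, ← Finset.sum_mul, hsum, hsum']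
        ring
    _ ≤ mi p := Finset.sum_le_sum fun a _ => Finset.sum_le_sum fun b _ =>
        sub_le_mul_log_div (hp a b)
          (mul_nonneg (Finset.sum_nonneg fun _ _ => hp _ _) (Finset.sum_nonneg fun _ _ => hp _ _))
          fun h => mul_pos (sum_pos_of_pos (hp a) h) (sum_pos_of_pos (hp · b) h)

lemma mi_mul_eq_zero {f : A → ℝ} {g : B → ℝ} (hf : ∑ a, f a = 1) (hg : ∑ b, g b = 1) :
    mi (fun a b => f a * g b) = 0 := by
  -- `x / x` is `1` or, for `x = 0`, `0`; its logarithm vanishes either way.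
  have hlog : ∀ x : ℝ, Real.log (x / x) = 0 := fun x => by
    rcases eq_or_ne x 0 with rfl | hx <;> simp [*]
  simp [mi, ← Finset.mul_sum, ← Finset.sum_mul, hf, hg, hlog]

lemma mi_comp_equiv {A' : Type} [Fintype A'] (e : A ≃ A') (p : A' → B → ℝ) :
    mi (fun a b => p (e a) b) = mi p := by
  have hcol : ∀ b, ∑ a, p (e a) b = ∑ a', p a' b := fun b => e.sum_comp (p · b)
  simp only [mi, hcol]
  exact e.sum_comp fun a' => ∑ b, p a' b * Real.log (p a' b / ((∑ b', p a' b') * ∑ a', p a' b))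

lemma log_div_mul_eq_log_add_log {p pac pb pbc pc : ℝ} (hp : 0 < p) (hpac : 0 < pac)
    (hpb : 0 < pb) (hpbc : 0 < pbc) (hpc : 0 < pc) :
    Real.log (p / (pac * pb)) = Real.log (pbc / (pc * pb)) + Real.log (pc * p / (pac * pbc)) := by
  rw [← Real.log_mul (by positivity) (by positivity)]
  congr 1
  field_simp

/-- The chain rule `I(A,C;B) = I(C;B) + I(A;B|C)`. -/
lemma mi_prod_eq_mi_add_cmi {p : A → B → C → ℝ} (hp : ∀ a b c, 0 ≤ p a b c) :
    mi (fun (ac : A × C) b => p ac.1 b ac.2) = mi (fun c b => ∑ a, p a b c) + cmi p := by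
  simp only [mi, cmi, Fintype.sum_prod_type]
  conv_rhs => arg 1; simp only [Finset.sum_mul (s := (Finset.univ : Finset A))]
  simp only [Finset.sum_comm (β := ℝ) (s := (Finset.univ : Finset A)),
    Finset.sum_comm (β := ℝ) (s := (Finset.univ : Finset B)) (t := (Finset.univ : Finset C)),
    ← Finset.sum_add_distrib]
  refine Finset.sum_congr rfl fun c _ => Finset.sum_congr rfl fun b _ =>
    Finset.sum_congr rfl fun a _ => ?_
  rcases (hp a b c).eq_or_lt with h0 | hpos
  · simp [← h0]
  have hpac : 0 < ∑ b', p a b' c := sum_pos_of_pos (hp a · c) hpos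
  have hpbc : 0 < ∑ a', p a' b c := sum_pos_of_pos (hp · b c) hpos
  have hpb : 0 < ∑ c', ∑ a', p a' b c' :=
    sum_pos_of_pos (fun c' => Finset.sum_nonneg fun a' _ => hp a' b c') (a := c) hpbc
  have hpc : 0 < ∑ b', ∑ a', p a' b' c :=
    sum_pos_of_pos (fun b' => Finset.sum_nonneg fun a' _ => hp a' b' c) (a := b) hpbc
  rw [log_div_mul_eq_log_add_log hpos hpac hpb hpbc hpc, mul_add]

end MutualInformation

namespace AuxP

variable {ch : DMMAC S X1 X2 Y} (d : AuxP ch)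

lemma joint_nonneg (s : S) (u : d.U) (v : d.V) (x1 : X1) (x2 : X2) (y : Y) :
    0 ≤ d.joint s u v x1 x2 y := by
  have := ch.Q_nonneg s; have := d.pX2_nonneg x2; have := d.pV_nonneg s x2 v
  have := d.pUX1_nonneg s v x2 u x1; have := ch.W_nonneg x1 x2 s y
  unfold joint; positivity

lemma sum_joint_eq_Q_mul_pX2 (s : S) (x2 : X2) :
    ∑ v, ∑ u, ∑ x1, ∑ y, d.joint s u v x1 x2 y = ch.Q s * d.pX2 x2 := by
  simp only [joint, ← Finset.mul_sum, ch.W_sum, mul_one, d.pUX1_sum, d.pV_sum]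

lemma iUVX2S_eq_iVS_X2_add_iUS_VX2 : d.iUVX2S = d.iVS_X2 + d.iUS_VX2 := by
  have hindep : mi (fun x2 s => ∑ v, ∑ u, ∑ x1, ∑ y, d.joint s u v x1 x2 y) = 0 := by
    simp only [d.sum_joint_eq_Q_mul_pX2, mul_comm (ch.Q _)]
    exact mi_mul_eq_zero d.pX2_sum ch.Q_sum
  have hU := mi_prod_eq_mi_add_cmi (A := d.U) (C := d.V × X2)
    (p := fun u s c => ∑ x1, ∑ y, d.joint s u c.1 x1 c.2 y)
    fun _ _ _ => Finset.sum_nonneg fun _ _ => Finset.sum_nonneg fun _ _ => d.joint_nonneg ..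
  have hV := mi_prod_eq_mi_add_cmi (A := d.V) (C := X2)
    (p := fun v s x2 => ∑ u, ∑ x1, ∑ y, d.joint s u v x1 x2 y)
    fun _ _ _ => Finset.sum_nonneg fun _ _ => Finset.sum_nonneg fun _ _ =>
      Finset.sum_nonneg fun _ _ => d.joint_nonneg ..
  rw [iUVX2S, iVS_X2, iUS_VX2, hU, hV, hindep, zero_add]

lemma iUVX2Y_eq_iX2Y_add_iUVY_X2 : d.iUVX2Y = d.iX2Y + d.iUVY_X2 := by
  have hUV := mi_prod_eq_mi_add_cmi (A := d.U × d.V) (C := X2)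
    (p := fun uv y x2 => ∑ s, ∑ x1, d.joint s uv.1 uv.2 x1 x2 y)
    fun _ _ _ => Finset.sum_nonneg fun _ _ => Finset.sum_nonneg fun _ _ => d.joint_nonneg ..
  refine (mi_comp_equiv (Equiv.prodAssoc d.U d.V X2) _).symm.trans
    (hUV.trans (congrArg (· + _) (congrArg mi ?_)))
  ext x2 y
  simp only [Fintype.sum_prod_type, Finset.sum_comm (β := ℝ) (t := (Finset.univ : Finset S))]

lemma iX2Y_nonneg : 0 ≤ d.iX2Y := by
  refine mi_nonneg (fun _ _ => Finset.sum_nonneg fun _ _ => Finset.sum_nonneg fun _ _ =>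
    Finset.sum_nonneg fun _ _ => Finset.sum_nonneg fun _ _ => d.joint_nonneg ..) ?_
  simp only [Finset.sum_comm (β := ℝ) (s := (Finset.univ : Finset Y)),
    Finset.sum_comm (β := ℝ) (s := (Finset.univ : Finset d.U)) (t := (Finset.univ : Finset d.V)),
    d.sum_joint_eq_Q_mul_pX2, ← Finset.sum_mul, ch.Q_sum, one_mul, d.pX2_sum]

lemma exists_auxiliary_rates_iff {Rc R1 : ℝ} (hRc : 0 ≤ Rc) :
    (∃ R0 Rhat : ℝ, 0 ≤ R0 ∧ R0 ≤ d.iX2Y ∧ d.iVS_X2 ≤ Rhat ∧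
        R1 ≤ d.iUY_VX2 - d.iUS_VX2 ∧
        (Rhat - R0) + R1 ≤ d.iUVY_X2 - d.iUS_VX2 ∧
        Rc + R1 + Rhat ≤ d.iUVX2Y - d.iUS_VX2) ↔
      R1 ≤ d.iUY_VX2 - d.iUS_VX2 ∧ Rc + R1 ≤ d.iUVX2Y - d.iUVX2S := by
  have hY := d.iUVX2Y_eq_iX2Y_add_iUVY_X2
  have hS := d.iUVX2S_eq_iVS_X2_add_iUS_VX2
  constructor
  · rintro ⟨R0, Rhat, -, -, hRhat, hR1, -, hsum⟩
    exact ⟨hR1, by linarith⟩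
  · rintro ⟨hR1, hsum⟩
    exact ⟨d.iX2Y, d.iVS_X2, d.iX2Y_nonneg, le_rfl, le_rfl, hR1, by linarith, by linarith⟩

end AuxP

/-- The rate region of the Wyner–Ziv-type scheme of Theorem 2 equals 𝒞: for every element
of 𝒫 the region obtained before Fourier–Motzkin elimination (with auxiliary rates `R0`, `R̂`)
coincides with the corresponding region of 𝒞, and the union over 𝒫 equals 𝒞. -/
theorem wynerZiv_region_eq_regionC {S X1 X2 Y : Type}
    [Fintype S] [Fintype X1] [Fintype X2] [Fintype Y] (ch : DMMAC S X1 X2 Y) :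
    (∀ d : AuxP ch,
      {r : ℝ × ℝ | 0 ≤ r.1 ∧ 0 ≤ r.2 ∧ ∃ R0 Rhat : ℝ,
        0 ≤ R0 ∧ R0 ≤ d.iX2Y ∧ d.iVS_X2 ≤ Rhat ∧
        r.2 ≤ d.iUY_VX2 - d.iUS_VX2 ∧
        (Rhat - R0) + r.2 ≤ d.iUVY_X2 - d.iUS_VX2 ∧
        r.1 + r.2 + Rhat ≤ d.iUVX2Y - d.iUS_VX2}
      = {r : ℝ × ℝ | 0 ≤ r.1 ∧ 0 ≤ r.2 ∧
          r.2 ≤ d.iUY_VX2 - d.iUS_VX2 ∧ r.1 + r.2 ≤ d.iUVX2Y - d.iUVX2S}) ∧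
    {r : ℝ × ℝ | 0 ≤ r.1 ∧ 0 ≤ r.2 ∧ ∃ (d : AuxP ch) (R0 Rhat : ℝ),
        0 ≤ R0 ∧ R0 ≤ d.iX2Y ∧ d.iVS_X2 ≤ Rhat ∧
        r.2 ≤ d.iUY_VX2 - d.iUS_VX2 ∧
        (Rhat - R0) + r.2 ≤ d.iUVY_X2 - d.iUS_VX2 ∧
        r.1 + r.2 + Rhat ≤ d.iUVX2Y - d.iUS_VX2} = regionC ch := by
  refine ⟨fun d => Set.ext fun r => ?_, Set.ext fun r => ?_⟩
  · exact and_congr_right fun hRc => and_congr_right fun _ => d.exists_auxiliary_rates_iff hRc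
  · exact and_congr_right fun hRc => and_congr_right fun _ =>
      exists_congr fun d => d.exists_auxiliary_rates_iff hRc

end
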